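/- arXiv:2502.21304 — 8 statements merged into one kernel-verified Lean document; each statement's English description precedes it below -/
import Mathlib

section
/- Proposition 1 (refined policy value). Assume Assumption A2 (common cluster support) and Assumption A3 (reward homogeneity, with cluster-level mean reward q̄). Then the policy value satisfies V(π) = Σ_c p(c) · Σ_a p(a|c,π) · q̄ a c. -/
/-!
Under reward homogeneity the reward no longer depends on the context, so `V(π)` can be summed
over `x` first, and `Σ_x pX x * pC x c * π x a` is the joint probability `p(c) * p(a|c,π)`.
That factorisation also holds when `p(c) = 0`: by nonnegativity every `pX x * pC x c` then
vanishes, so the junk value `p(x|c) = 0` is harmless.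
-/

open Finset

namespace OPE

noncomputable section

variable {X C A : Type*} [Fintype X] [Fintype C] [Fintype A]
  [Nonempty X] [Nonempty C] [Nonempty A]

/-- Cluster marginal `p(c) = Σ_x pX x * pC x c`. -/
def pc (pX : X → ℝ) (pC : X → C → ℝ) (c : C) : ℝ :=
  ∑ x, pX x * pC x c

/-- Conditional context distribution `p(x|c)` (zero when `p(c) = 0`). -/
def pxc (pX : X → ℝ) (pC : X → C → ℝ) (x : X) (c : C) : ℝ :=
  pX x * pC x c / pc pX pC c

/-- `p(a|c,ρ) = Σ_x p(x|c) * ρ x a`. -/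
def pac (pX : X → ℝ) (pC : X → C → ℝ) (ρ : X → A → ℝ) (c : C) (a : A) : ℝ :=
  ∑ x, pxc pX pC x c * ρ x a

/-- IPS weight `w(a,x) = π x a / π₀ x a` (with the convention `t/0 = 0`). -/
def wIPS (π π₀ : X → A → ℝ) (a : A) (x : X) : ℝ := π x a / π₀ x a

/-- CHIPS weight `w(a,c) = p(a|c,π) / p(a|c,π₀)` (with the convention `t/0 = 0`). -/
def wCHIPS (pX : X → ℝ) (pC : X → C → ℝ) (π π₀ : X → A → ℝ) (a : A) (c : C) : ℝ :=
  pac pX pC π c a / pac pX pC π₀ c a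

/-- Policy value `V(π)`. -/
def V (pX : X → ℝ) (pC : X → C → ℝ) (π : X → A → ℝ) (q : A → C → X → ℝ) : ℝ :=
  ∑ x, ∑ c, ∑ a, pX x * pC x c * π x a * q a c x

/-- Single-sample mean of a weighted estimator under the logging distribution. -/
def mu (pX : X → ℝ) (pC : X → C → ℝ) (π₀ : X → A → ℝ) (q : A → C → X → ℝ)
    (ω : X → C → A → ℝ) : ℝ :=
  ∑ x, ∑ c, ∑ a, (pX x * pC x c * π₀ x a) * ω x c a * q a c x

/-- Bias of a weighted estimator. -/
def bias (pX : X → ℝ) (pC : X → C → ℝ) (π π₀ : X → A → ℝ) (q : A → C → X → ℝ)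
    (ω : X → C → A → ℝ) : ℝ :=
  mu pX pC π₀ q ω - V pX pC π q

/-- Single-sample variance of a weighted estimator. -/
def varW (pX : X → ℝ) (pC : X → C → ℝ) (π₀ : X → A → ℝ) (q m2 : A → C → X → ℝ)
    (ω : X → C → A → ℝ) : ℝ :=
  (∑ x, ∑ c, ∑ a, (pX x * pC x c * π₀ x a) * ω x c a ^ 2 * m2 a c x)
    - (mu pX pC π₀ q ω) ^ 2

/-- Single-sample mean squared error of a weighted estimator. -/
def mseW (pX : X → ℝ) (pC : X → C → ℝ) (π π₀ : X → A → ℝ) (q m2 : A → C → X → ℝ)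
    (ω : X → C → A → ℝ) : ℝ :=
  (∑ x, ∑ c, ∑ a, (pX x * pC x c * π₀ x a) * ω x c a ^ 2 * m2 a c x)
    - 2 * V pX pC π q * mu pX pC π₀ q ω + (V pX pC π q) ^ 2

end

theorem sum_mul_div_sum_of_nonneg {ι 𝕜 : Type*} [Fintype ι] [Field 𝕜] [LinearOrder 𝕜]
    [IsStrictOrderedRing 𝕜] {f : ι → 𝕜} (hf : 0 ≤ f) (i : ι) :
    (∑ j, f j) * (f i / ∑ j, f j) = f i := by
  by_cases hsum : ∑ j, f j = 0
  · rw [(Fintype.sum_eq_zero_iff_of_nonneg hf).mp hsum, Pi.zero_apply, zero_div, mul_zero]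
  · exact mul_div_cancel₀ _ hsum

section

variable {X C A : Type*} [Fintype X] {pX : X → ℝ} {pC : X → C → ℝ}

theorem pc_mul_pxc (hpX0 : ∀ x, 0 ≤ pX x) (hpC0 : ∀ x c, 0 ≤ pC x c) (x : X) (c : C) :
    pc pX pC c * pxc pX pC x c = pX x * pC x c :=
  sum_mul_div_sum_of_nonneg (fun y => mul_nonneg (hpX0 y) (hpC0 y c)) x

theorem pc_mul_pac (hpX0 : ∀ x, 0 ≤ pX x) (hpC0 : ∀ x c, 0 ≤ pC x c) (ρ : X → A → ℝ)
    (c : C) (a : A) :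
    pc pX pC c * pac pX pC ρ c a = ∑ x, pX x * pC x c * ρ x a := by
  simp only [pac, mul_sum, ← mul_assoc, pc_mul_pxc hpX0 hpC0]

end

variable {X C A : Type*} [Fintype X] [Fintype C] [Fintype A]
  [Nonempty X] [Nonempty C] [Nonempty A]

theorem prop1_refined_policy_value_general
    (pX : X → ℝ) (pC : X → C → ℝ) (π : X → A → ℝ)
    (q : A → C → X → ℝ) (qbar : A → C → ℝ)
    (hpX0 : ∀ x, 0 ≤ pX x)
    (hpC0 : ∀ x c, 0 ≤ pC x c)
    (hA3 : ∀ (a : A) (c : C) (x : X), q a c x = qbar a c) :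
    V pX pC π q = ∑ c, pc pX pC c * ∑ a, pac pX pC π c a * qbar a c := calc
  V pX pC π q = ∑ x, ∑ c, ∑ a, pX x * pC x c * π x a * qbar a c := by simp only [V, hA3]
  _ = ∑ c, ∑ a, (∑ x, pX x * pC x c * π x a) * qbar a c := by
    simp only [sum_mul]
    rw [sum_comm]
    exact sum_congr rfl fun _ _ => sum_comm
  _ = ∑ c, pc pX pC c * ∑ a, pac pX pC π c a * qbar a c := by
    simp only [mul_sum, ← mul_assoc, pc_mul_pac hpX0 hpC0]

/-- Proposition 1 (refined policy value). -/
theorem prop1_refined_policy_value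
    (pX : X → ℝ) (pC : X → C → ℝ) (π π₀ : X → A → ℝ)
    (q : A → C → X → ℝ) (qbar : A → C → ℝ)
    (hpX0 : ∀ x, 0 ≤ pX x) (hpX1 : ∑ x, pX x = 1)
    (hpC0 : ∀ x c, 0 ≤ pC x c) (hpC1 : ∀ x, ∑ c, pC x c = 1)
    (hπ : ∀ x a, 0 ≤ π x a) (hπ1 : ∀ x, ∑ a, π x a = 1)
    (hπ₀ : ∀ x a, 0 ≤ π₀ x a) (hπ₀1 : ∀ x, ∑ a, π₀ x a = 1)
    (hA2 : ∀ (a : A) (c : C), 0 < pc pX pC c →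
      0 < pac pX pC π c a → 0 < pac pX pC π₀ c a)
    (hA3 : ∀ (a : A) (c : C) (x : X), q a c x = qbar a c) :
    V pX pC π q = ∑ c, pc pX pC c * ∑ a, pac pX pC π c a * qbar a c :=
  prop1_refined_policy_value_general pX pC π q qbar hpX0 hpC0 hA3

end OPE
end

section
/- Proposition 3 (bias bound under δ-homogeneity). Assume q a c x ≥ 0 for all a, c, x; assume p(a|c,π) > 0 and p(a|c,π₀) > 0 for every a and every c with p(c) > 0; and assume δ-homogeneity bounds (δ⁻π, δ⁺π) for π and (δ⁻π₀, δ⁺π₀) for π₀. Let Δ(c,a) = max(δ⁺π(c,a), δ⁺π₀(c,a)) − min(δ⁻π(c,a), δ⁻π₀(c,a)). Then the bias of the CHIPS estimator satisfies the two-sided bound −B ≤ Bias(ω_CHIPS) ≤ B, hence |Bias(ω_CHIPS)| ≤ B, where B = Σ_c p(c) · Σ_a p(a|c,π) · Σ_x p(x|c) · q a c x · Δ(c,a) and ω_CHIPS(x,c,a) = w(a,c). -/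
open Finset

namespace OPE

noncomputable section

variable {X C A : Type*} [Fintype X] [Fintype C] [Fintype A]
  [Nonempty X] [Nonempty C] [Nonempty A]

/-- Proposition 3 (bias bound under δ-homogeneity). -/
theorem prop3_bias_bound_delta_homogeneity
    (pX : X → ℝ) (pC : X → C → ℝ) (π π₀ : X → A → ℝ)
    (q : A → C → X → ℝ)
    (δmπ δpπ δmπ₀ δpπ₀ : C → A → ℝ)
    (hpX0 : ∀ x, 0 ≤ pX x) (hpX1 : ∑ x, pX x = 1)
    (hpC0 : ∀ x c, 0 ≤ pC x c) (hpC1 : ∀ x, ∑ c, pC x c = 1)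
    (hπ : ∀ x a, 0 ≤ π x a) (hπ1 : ∀ x, ∑ a, π x a = 1)
    (hπ₀ : ∀ x a, 0 ≤ π₀ x a) (hπ₀1 : ∀ x, ∑ a, π₀ x a = 1)
    (hq0 : ∀ a c x, 0 ≤ q a c x)
    (hpos : ∀ (a : A) (c : C), 0 < pc pX pC c →
      0 < pac pX pC π c a ∧ 0 < pac pX pC π₀ c a)
    (hδπ1 : ∀ (a : A) (c : C), 0 < pc pX pC c → δmπ c a ≤ 1 ∧ 1 ≤ δpπ c a)
    (hδπ : ∀ (a : A) (c : C) (x : X), 0 < pc pX pC c → 0 < pxc pX pC x c →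
      δmπ c a ≤ π x a / pac pX pC π c a ∧ π x a / pac pX pC π c a ≤ δpπ c a)
    (hδπ₀1 : ∀ (a : A) (c : C), 0 < pc pX pC c → δmπ₀ c a ≤ 1 ∧ 1 ≤ δpπ₀ c a)
    (hδπ₀ : ∀ (a : A) (c : C) (x : X), 0 < pc pX pC c → 0 < pxc pX pC x c →
      δmπ₀ c a ≤ π₀ x a / pac pX pC π₀ c a ∧ π₀ x a / pac pX pC π₀ c a ≤ δpπ₀ c a) :
    -(∑ c, pc pX pC c * ∑ a, pac pX pC π c a * ∑ x, pxc pX pC x c * q a c x *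
        (max (δpπ c a) (δpπ₀ c a) - min (δmπ c a) (δmπ₀ c a)))
      ≤ bias pX pC π π₀ q (fun x c a => wCHIPS pX pC π π₀ a c) ∧
    bias pX pC π π₀ q (fun x c a => wCHIPS pX pC π π₀ a c)
      ≤ ∑ c, pc pX pC c * ∑ a, pac pX pC π c a * ∑ x, pxc pX pC x c * q a c x *
        (max (δpπ c a) (δpπ₀ c a) - min (δmπ c a) (δmπ₀ c a)) ∧
    |bias pX pC π π₀ q (fun x c a => wCHIPS pX pC π π₀ a c)|
      ≤ ∑ c, pc pX pC c * ∑ a, pac pX pC π c a * ∑ x, pxc pX pC x c * q a c x *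
        (max (δpπ c a) (δpπ₀ c a) - min (δmπ c a) (δmπ₀ c a)) := by
  classical
  have hpc0 : ∀ c, 0 ≤ pc pX pC c := fun c =>
    Finset.sum_nonneg fun x _ => mul_nonneg (hpX0 x) (hpC0 x c)
  have hpxc0 : ∀ x c, 0 ≤ pxc pX pC x c := fun x c =>
    div_nonneg (mul_nonneg (hpX0 x) (hpC0 x c)) (hpc0 c)
  have hpacπ0 : ∀ c a, 0 ≤ pac pX pC π c a := fun c a =>
    Finset.sum_nonneg fun x _ => mul_nonneg (hpxc0 x c) (hπ x a)
  set Δ : C → A → ℝ := fun c a =>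
    max (δpπ c a) (δpπ₀ c a) - min (δmπ c a) (δmπ₀ c a) with hΔ
  set T : X → C → A → ℝ := fun x c a => pc pX pC c * pac pX pC π c a *
      (pxc pX pC x c * q a c x *
        (π₀ x a / pac pX pC π₀ c a - π x a / pac pX pC π c a)) with hT
  set K : X → C → A → ℝ := fun x c a => pc pX pC c * pac pX pC π c a *
      (pxc pX pC x c * q a c x * Δ c a) with hK
  have hbias : bias pX pC π π₀ q (fun x c a => wCHIPS pX pC π π₀ a c)
      = ∑ x, ∑ c, ∑ a, T x c a := by
    unfold bias mu V
    rw [← Finset.sum_sub_distrib]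
    refine Finset.sum_congr rfl fun x _ => ?_
    rw [← Finset.sum_sub_distrib]
    refine Finset.sum_congr rfl fun c _ => ?_
    rw [← Finset.sum_sub_distrib]
    refine Finset.sum_congr rfl fun a _ => ?_
    by_cases hc : pc pX pC c = 0
    · have hz : pX x * pC x c = 0 :=
        (Finset.sum_eq_zero_iff_of_nonneg
          (fun x _ => mul_nonneg (hpX0 x) (hpC0 x c))).mp hc x (Finset.mem_univ x)
      simp [hT, hz, hc]
    · have hcpos : 0 < pc pX pC c := lt_of_le_of_ne (hpc0 c) (Ne.symm hc)
      obtain ⟨h1, h0⟩ := hpos a c hcpos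
      simp only [hT, wCHIPS, pxc]
      field_simp
  have habsT : ∀ x c a, |T x c a| ≤ K x c a := by
    intro x c a
    by_cases hc : pc pX pC c = 0
    · simp [hT, hK, hc]
    have hcpos : 0 < pc pX pC c := lt_of_le_of_ne (hpc0 c) (Ne.symm hc)
    by_cases hx : pxc pX pC x c = 0
    · simp [hT, hK, hx]
    have hxpos : 0 < pxc pX pC x c := lt_of_le_of_ne (hpxc0 x c) (Ne.symm hx)
    have hr := hδπ a c x hcpos hxpos
    have hr0 := hδπ₀ a c x hcpos hxpos
    have hD : |π₀ x a / pac pX pC π₀ c a - π x a / pac pX pC π c a| ≤ Δ c a := by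
      rw [abs_le]
      constructor
      · have h2 := min_le_right (δmπ c a) (δmπ₀ c a)
        have h3 := le_max_left (δpπ c a) (δpπ₀ c a)
        simp only [hΔ]
        linarith [hr0.1, hr.2]
      · have h2 := min_le_left (δmπ c a) (δmπ₀ c a)
        have h3 := le_max_right (δpπ c a) (δpπ₀ c a)
        simp only [hΔ]
        linarith [hr0.2, hr.1]
    have hA : 0 ≤ pc pX pC c * pac pX pC π c a * (pxc pX pC x c * q a c x) :=
      mul_nonneg (mul_nonneg (hpc0 c) (hpacπ0 c a))
        (mul_nonneg (hpxc0 x c) (hq0 a c x))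
    have hTA : T x c a = pc pX pC c * pac pX pC π c a * (pxc pX pC x c * q a c x) *
        (π₀ x a / pac pX pC π₀ c a - π x a / pac pX pC π c a) := by
      simp only [hT]; ring
    calc |T x c a|
        = pc pX pC c * pac pX pC π c a * (pxc pX pC x c * q a c x) *
            |π₀ x a / pac pX pC π₀ c a - π x a / pac pX pC π c a| := by
          rw [hTA, abs_mul, abs_of_nonneg hA]
      _ ≤ pc pX pC c * pac pX pC π c a * (pxc pX pC x c * q a c x) * Δ c a :=
          mul_le_mul_of_nonneg_left hD hA
      _ = K x c a := by simp only [hK]; ring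
  have hB : ∑ x, ∑ c, ∑ a, K x c a
      = ∑ c, pc pX pC c * ∑ a, pac pX pC π c a *
          ∑ x, pxc pX pC x c * q a c x * Δ c a := by
    rw [Finset.sum_comm]
    refine Finset.sum_congr rfl fun c _ => ?_
    rw [Finset.sum_comm, Finset.mul_sum]
    refine Finset.sum_congr rfl fun a _ => ?_
    rw [Finset.mul_sum, Finset.mul_sum]
    refine Finset.sum_congr rfl fun x _ => ?_
    simp only [hK]; ring
  have hfinal : |bias pX pC π π₀ q (fun x c a => wCHIPS pX pC π π₀ a c)|
      ≤ ∑ c, pc pX pC c * ∑ a, pac pX pC π c a *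
          ∑ x, pxc pX pC x c * q a c x * Δ c a := by
    rw [hbias, ← hB]
    calc |∑ x, ∑ c, ∑ a, T x c a| ≤ ∑ x, ∑ c, ∑ a, |T x c a| := by
          refine (Finset.abs_sum_le_sum_abs _ _).trans
            (Finset.sum_le_sum fun x _ => ?_)
          refine (Finset.abs_sum_le_sum_abs _ _).trans
            (Finset.sum_le_sum fun c _ => ?_)
          exact Finset.abs_sum_le_sum_abs _ _
      _ ≤ ∑ x, ∑ c, ∑ a, K x c a :=
          Finset.sum_le_sum fun x _ => Finset.sum_le_sum fun c _ =>
            Finset.sum_le_sum fun a _ => habsT x c a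
  obtain ⟨h1, h2⟩ := abs_le.mp hfinal
  exact ⟨h1, h2, hfinal⟩

end

end OPE
end

section
/- Variance-gap identity (intermediate step in the proof of Proposition 8). Assume Assumption A1 (common support). Then for ω_IPS(x,c,a) = w(a,x) and ω_CHIPS(x,c,a) = w(a,c), Var(ω_IPS) − Var(ω_CHIPS) = Σ_{x,c,a} p₀(x,c,a) · (w(a,x)² − w(a,c)²) · m2 a c x + 2 · V(π) · Bias(ω_CHIPS) + Bias(ω_CHIPS)². -/
open Finset

namespace OPE

noncomputable section

variable {X C A : Type*} [Fintype X] [Fintype C] [Fintype A]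
  [Nonempty X] [Nonempty C] [Nonempty A]

/-- Variance-gap identity (intermediate step in the proof of Proposition 8). -/
theorem variance_gap_identity
    (pX : X → ℝ) (pC : X → C → ℝ) (π π₀ : X → A → ℝ)
    (q m2 : A → C → X → ℝ)
    (hpX0 : ∀ x, 0 ≤ pX x) (hpX1 : ∑ x, pX x = 1)
    (hpC0 : ∀ x c, 0 ≤ pC x c) (hpC1 : ∀ x, ∑ c, pC x c = 1)
    (hπ : ∀ x a, 0 ≤ π x a) (hπ1 : ∀ x, ∑ a, π x a = 1)
    (hπ₀ : ∀ x a, 0 ≤ π₀ x a) (hπ₀1 : ∀ x, ∑ a, π₀ x a = 1)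
    (hm2 : ∀ a c x, 0 ≤ m2 a c x)
    (hA1 : ∀ (x : X) (a : A), 0 < π x a → 0 < π₀ x a) :
    varW pX pC π₀ q m2 (fun x c a => wIPS π π₀ a x)
      - varW pX pC π₀ q m2 (fun x c a => wCHIPS pX pC π π₀ a c)
    = (∑ x, ∑ c, ∑ a, (pX x * pC x c * π₀ x a) *
        (wIPS π π₀ a x ^ 2 - wCHIPS pX pC π π₀ a c ^ 2) * m2 a c x)
      + 2 * V pX pC π q * bias pX pC π π₀ q (fun x c a => wCHIPS pX pC π π₀ a c)
      + (bias pX pC π π₀ q (fun x c a => wCHIPS pX pC π π₀ a c)) ^ 2 := by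
  have hmu : mu pX pC π₀ q (fun x c a => wIPS π π₀ a x) = V pX pC π q := by
    unfold mu V wIPS
    refine Finset.sum_congr rfl fun x _ => Finset.sum_congr rfl fun c _ =>
      Finset.sum_congr rfl fun a _ => ?_
    rcases eq_or_lt_of_le (hπ₀ x a) with h | h
    · have hπ0 : π x a = 0 := by
        rcases eq_or_lt_of_le (hπ x a) with h2 | h2
        · exact h2.symm
        · exact absurd (hA1 x a h2) (by rw [← h]; exact lt_irrefl 0)
      simp [← h, hπ0]
    · field_simp
  unfold varW bias
  rw [hmu]
  simp only [mul_sub, sub_mul, Finset.sum_sub_distrib]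
  ring

end

end OPE
end

section
/- Proposition 4 (bias of CHIPS under deficient cluster-level actions). Assume Assumption A3 (reward homogeneity, with cluster-level mean reward q̄) and q̄ a c ≥ 0 for all a, c. Let U(c,π₀) = {a : p(a|c,π₀) = 0}. Then Bias(ω_CHIPS) = − Σ_c p(c) · Σ_{a ∈ U(c,π₀)} p(a|c,π) · q̄ a c, and consequently |Bias(ω_CHIPS)| = Σ_c p(c) · Σ_{a ∈ U(c,π₀)} p(a|c,π) · q̄ a c, where ω_CHIPS(x,c,a) = w(a,c). -/
open Finset

namespace OPE

noncomputable section

variable {X C A : Type*} [Fintype X] [Fintype C] [Fintype A]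
  [Nonempty X] [Nonempty C] [Nonempty A]

/-- Proposition 4 (bias of CHIPS under deficient cluster-level actions). -/
theorem prop4_chips_bias_deficient_actions
    (pX : X → ℝ) (pC : X → C → ℝ) (π π₀ : X → A → ℝ)
    (q : A → C → X → ℝ) (qbar : A → C → ℝ)
    (hpX0 : ∀ x, 0 ≤ pX x) (hpX1 : ∑ x, pX x = 1)
    (hpC0 : ∀ x c, 0 ≤ pC x c) (hpC1 : ∀ x, ∑ c, pC x c = 1)
    (hπ : ∀ x a, 0 ≤ π x a) (hπ1 : ∀ x, ∑ a, π x a = 1)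
    (hπ₀ : ∀ x a, 0 ≤ π₀ x a) (hπ₀1 : ∀ x, ∑ a, π₀ x a = 1)
    (hA3 : ∀ (a : A) (c : C) (x : X), q a c x = qbar a c)
    (hqbar : ∀ a c, 0 ≤ qbar a c) :
    bias pX pC π π₀ q (fun x c a => wCHIPS pX pC π π₀ a c)
      = -(∑ c, pc pX pC c * ∑ a,
          if pac pX pC π₀ c a = 0 then pac pX pC π c a * qbar a c else 0) ∧
    |bias pX pC π π₀ q (fun x c a => wCHIPS pX pC π π₀ a c)|
      = ∑ c, pc pX pC c * ∑ a,
          if pac pX pC π₀ c a = 0 then pac pX pC π c a * qbar a c else 0 := by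
  have hpc0 : ∀ c, 0 ≤ pc pX pC c := fun c =>
    Finset.sum_nonneg fun x _ => mul_nonneg (hpX0 x) (hpC0 x c)
  have key : ∀ (ρ : X → A → ℝ) (c : C) (a : A),
      ∑ x, pX x * pC x c * ρ x a = pc pX pC c * pac pX pC ρ c a := by
    intro ρ c a
    by_cases h : pc pX pC c = 0
    · have hz : ∀ x ∈ Finset.univ, pX x * pC x c = 0 :=
        (Finset.sum_eq_zero_iff_of_nonneg
          (fun x _ => mul_nonneg (hpX0 x) (hpC0 x c))).mp h
      rw [h, zero_mul]
      exact Finset.sum_eq_zero fun x _ => by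
        rw [hz x (Finset.mem_univ x), zero_mul]
    · rw [pac, Finset.mul_sum]
      refine Finset.sum_congr rfl fun x _ => ?_
      rw [pxc]
      field_simp
  have hpacπ : ∀ c a, 0 ≤ pac pX pC π c a := fun c a =>
    Finset.sum_nonneg fun x _ =>
      mul_nonneg (div_nonneg (mul_nonneg (hpX0 x) (hpC0 x c)) (hpc0 c)) (hπ x a)
  have hmu : mu pX pC π₀ q (fun x c a => wCHIPS pX pC π π₀ a c)
      = ∑ c, pc pX pC c * ∑ a,
          (if pac pX pC π₀ c a = 0 then 0 else pac pX pC π c a * qbar a c) := by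
    rw [mu, Finset.sum_comm]
    refine Finset.sum_congr rfl fun c _ => ?_
    rw [Finset.sum_comm, Finset.mul_sum]
    refine Finset.sum_congr rfl fun a _ => ?_
    have h1 : ∑ x, pX x * pC x c * π₀ x a * wCHIPS pX pC π π₀ a c * q a c x
        = (∑ x, pX x * pC x c * π₀ x a) * (wCHIPS pX pC π π₀ a c * qbar a c) := by
      rw [Finset.sum_mul]
      exact Finset.sum_congr rfl fun x _ => by rw [hA3]; ring
    rw [h1, key π₀ c a]
    by_cases h : pac pX pC π₀ c a = 0
    · simp [h, wCHIPS]
    · rw [if_neg h, wCHIPS]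
      field_simp
  have hV : V pX pC π q = ∑ c, pc pX pC c * ∑ a, pac pX pC π c a * qbar a c := by
    rw [V, Finset.sum_comm]
    refine Finset.sum_congr rfl fun c _ => ?_
    rw [Finset.sum_comm, Finset.mul_sum]
    refine Finset.sum_congr rfl fun a _ => ?_
    rw [← mul_assoc, ← key π c a, Finset.sum_mul]
    exact Finset.sum_congr rfl fun x _ => by rw [hA3]
  have hbias : bias pX pC π π₀ q (fun x c a => wCHIPS pX pC π π₀ a c)
      = -(∑ c, pc pX pC c * ∑ a,
          if pac pX pC π₀ c a = 0 then pac pX pC π c a * qbar a c else 0) := by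
    rw [bias, hmu, hV, ← Finset.sum_sub_distrib, ← Finset.sum_neg_distrib]
    refine Finset.sum_congr rfl fun c _ => ?_
    rw [← mul_sub, ← mul_neg]
    congr 1
    rw [← Finset.sum_sub_distrib, ← Finset.sum_neg_distrib]
    refine Finset.sum_congr rfl fun a _ => ?_
    by_cases h : pac pX pC π₀ c a = 0 <;> simp [h]
  refine ⟨hbias, ?_⟩
  rw [hbias, abs_neg, abs_of_nonneg]
  exact Finset.sum_nonneg fun c _ => mul_nonneg (hpc0 c) <|
    Finset.sum_nonneg fun a _ => by
      split
      · exact mul_nonneg (hpacπ c a) (hqbar a c)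
      · exact le_refl 0

end

end OPE
end

section
/- Bias of IPS under deficient actions in the cluster-refined setting (proved within the proof of Proposition 4). Assume Assumption A3 (reward homogeneity, with cluster-level mean reward q̄) and q̄ a c ≥ 0 for all a, c. Then Bias(ω_IPS) = − Σ_c p(c) · Σ_x p(x|c) · Σ_{a : π₀ x a = 0} π x a · q̄ a c, and consequently |Bias(ω_IPS)| = Σ_c p(c) · Σ_x p(x|c) · Σ_{a : π₀ x a = 0} π x a · q̄ a c, where ω_IPS(x,c,a) = w(a,x). -/
open Finset

namespace OPE

noncomputable section

variable {X C A : Type*} [Fintype X] [Fintype C] [Fintype A]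
  [Nonempty X] [Nonempty C] [Nonempty A]

/-- Bias of IPS under deficient actions in the cluster-refined setting. -/
theorem ips_bias_deficient_actions
    (pX : X → ℝ) (pC : X → C → ℝ) (π π₀ : X → A → ℝ)
    (q : A → C → X → ℝ) (qbar : A → C → ℝ)
    (hpX0 : ∀ x, 0 ≤ pX x) (hpX1 : ∑ x, pX x = 1)
    (hpC0 : ∀ x c, 0 ≤ pC x c) (hpC1 : ∀ x, ∑ c, pC x c = 1)
    (hπ : ∀ x a, 0 ≤ π x a) (hπ1 : ∀ x, ∑ a, π x a = 1)
    (hπ₀ : ∀ x a, 0 ≤ π₀ x a) (hπ₀1 : ∀ x, ∑ a, π₀ x a = 1)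
    (hA3 : ∀ (a : A) (c : C) (x : X), q a c x = qbar a c)
    (hqbar : ∀ a c, 0 ≤ qbar a c) :
    bias pX pC π π₀ q (fun x c a => wIPS π π₀ a x)
      = -(∑ c, pc pX pC c * ∑ x, pxc pX pC x c * ∑ a,
          if π₀ x a = 0 then π x a * qbar a c else 0) ∧
    |bias pX pC π π₀ q (fun x c a => wIPS π π₀ a x)|
      = ∑ c, pc pX pC c * ∑ x, pxc pX pC x c * ∑ a,
          if π₀ x a = 0 then π x a * qbar a c else 0 := by
  have key : ∀ c x, pc pX pC c * pxc pX pC x c = pX x * pC x c := by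
    intro c x
    unfold pxc
    by_cases h : pc pX pC c = 0
    · have hx : pX x * pC x c = 0 :=
        (Finset.sum_eq_zero_iff_of_nonneg
          (fun x _ => mul_nonneg (hpX0 x) (hpC0 x c))).mp h x (mem_univ x)
      simp [h, hx]
    · field_simp
  have hrhs : (∑ c, pc pX pC c * ∑ x, pxc pX pC x c * ∑ a,
          if π₀ x a = 0 then π x a * qbar a c else 0)
      = ∑ x, ∑ c, pX x * pC x c * ∑ a,
          if π₀ x a = 0 then π x a * qbar a c else 0 := by
    rw [Finset.sum_comm]
    refine Finset.sum_congr rfl fun c _ => ?_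
    rw [Finset.mul_sum]
    refine Finset.sum_congr rfl fun x _ => ?_
    rw [← mul_assoc, key]
  have hbias : bias pX pC π π₀ q (fun x c a => wIPS π π₀ a x)
      = -(∑ c, pc pX pC c * ∑ x, pxc pX pC x c * ∑ a,
          if π₀ x a = 0 then π x a * qbar a c else 0) := by
    rw [hrhs]
    unfold bias mu V wIPS
    rw [← Finset.sum_sub_distrib, ← Finset.sum_neg_distrib]
    refine Finset.sum_congr rfl fun x _ => ?_
    rw [← Finset.sum_sub_distrib, ← Finset.sum_neg_distrib]
    refine Finset.sum_congr rfl fun c _ => ?_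
    rw [Finset.mul_sum, ← Finset.sum_sub_distrib, ← Finset.sum_neg_distrib]
    refine Finset.sum_congr rfl fun a _ => ?_
    rw [hA3]
    by_cases h : π₀ x a = 0
    · simp [h]; ring
    · have : pX x * pC x c * π₀ x a * (π x a / π₀ x a) = pX x * pC x c * π x a := by
        field_simp
      simp [h, this]
  have hnn : 0 ≤ ∑ c, pc pX pC c * ∑ x, pxc pX pC x c * ∑ a,
          if π₀ x a = 0 then π x a * qbar a c else 0 := by
    rw [hrhs]
    refine Finset.sum_nonneg fun x _ => Finset.sum_nonneg fun c _ => ?_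
    refine mul_nonneg (mul_nonneg (hpX0 x) (hpC0 x c)) ?_
    refine Finset.sum_nonneg fun a _ => ?_
    split
    · exact mul_nonneg (hπ x a) (hqbar a c)
    · exact le_refl 0
  refine ⟨hbias, ?_⟩
  rw [hbias, abs_neg, abs_of_nonneg hnn]

end

end OPE
end

section
/- Bias of the MIPS estimator under deficient embeddings (proved within the proof of Proposition 9). In the finite embedding setting, assume the no-direct-effect condition: the conditional mean reward depends only on the context and the embedding, i.e. it is a function qE : X → E → ℝ. Then the bias of the MIPS estimator satisfies Σ_{x,a,e} pX x · π₀ x a · pE x a e · w(x,e) · qE x e − V(π) = − Σ_x pX x · Σ_{e : p(e|x,π₀) = 0} p(e|x,π) · qE x e, where V(π) = Σ_{x,a,e} pX x · π x a · pE x a e · qE x e. -/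
/-!
Summing out the action turns both values into sums against the marginals `p(e|x,π₀)` and
`p(e|x,π)`. Where `p(e|x,π₀) ≠ 0` the MIPS weight cancels it and the two terms agree; where
`p(e|x,π₀) = 0` the weight is `0` (by `t/0 = 0`), so only `-p(e|x,π) qE x e` survives.
-/

open Finset

namespace OPE

noncomputable section

variable {X A E : Type*} [Fintype X] [Fintype A] [Fintype E]
  [Nonempty X] [Nonempty A] [Nonempty E]

/-- Marginal embedding distribution `p(e|x,ρ) = Σ_a ρ x a * pE x a e`. -/
def pe (pE : X → A → E → ℝ) (ρ : X → A → ℝ) (x : X) (e : E) : ℝ :=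
  ∑ a, ρ x a * pE x a e

/-- MIPS weight `w(x,e) = p(e|x,π) / p(e|x,π₀)` (with the convention `t/0 = 0`). -/
def wMIPS (pE : X → A → E → ℝ) (π π₀ : X → A → ℝ) (x : X) (e : E) : ℝ :=
  pe pE π x e / pe pE π₀ x e

omit [Nonempty X] [Nonempty A] [Nonempty E] in
theorem sum_sum_sum_mul_eq_sum_mul_pe (c : X → ℝ) (ρ : X → A → ℝ) (pE : X → A → E → ℝ)
    (f : X → E → ℝ) :
    ∑ x, ∑ a, ∑ e, c x * (ρ x a * (pE x a e * f x e))
      = ∑ x, c x * ∑ e, pe pE ρ x e * f x e := by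
  refine sum_congr rfl fun x _ => ?_
  simp only [pe, mul_sum, sum_mul, mul_assoc]
  exact sum_comm

theorem mul_div_mul_sub_mul_eq_neg_ite {K : Type*} [Field K] [DecidableEq K] (a b c : K) :
    a * (b / a * c) - b * c = -if a = 0 then b * c else 0 := by
  split_ifs with ha
  · simp [ha]
  · field_simp
    ring

theorem mips_bias_deficient_embeddings_general
    (pX : X → ℝ) (π π₀ : X → A → ℝ) (pE : X → A → E → ℝ) (qE : X → E → ℝ) :
    (∑ x, ∑ a, ∑ e, pX x * π₀ x a * pE x a e * wMIPS pE π π₀ x e * qE x e)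
      - (∑ x, ∑ a, ∑ e, pX x * π x a * pE x a e * qE x e)
    = -(∑ x, pX x * ∑ e,
        if pe pE π₀ x e = 0 then pe pE π x e * qE x e else 0) := by
  simp only [mul_assoc, sum_sum_sum_mul_eq_sum_mul_pe, ← sum_sub_distrib, ← mul_sub,
    ← sum_neg_distrib, ← mul_neg, wMIPS, mul_div_mul_sub_mul_eq_neg_ite]

/-- Bias of the MIPS estimator under deficient embeddings. -/
theorem mips_bias_deficient_embeddings
    (pX : X → ℝ) (π π₀ : X → A → ℝ) (pE : X → A → E → ℝ) (qE : X → E → ℝ)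
    (hpX0 : ∀ x, 0 ≤ pX x) (hpX1 : ∑ x, pX x = 1)
    (hπ : ∀ x a, 0 ≤ π x a) (hπ1 : ∀ x, ∑ a, π x a = 1)
    (hπ₀ : ∀ x a, 0 ≤ π₀ x a) (hπ₀1 : ∀ x, ∑ a, π₀ x a = 1)
    (hpE0 : ∀ x a e, 0 ≤ pE x a e) (hpE1 : ∀ x a, ∑ e, pE x a e = 1) :
    (∑ x, ∑ a, ∑ e, pX x * π₀ x a * pE x a e * wMIPS pE π π₀ x e * qE x e)
      - (∑ x, ∑ a, ∑ e, pX x * π x a * pE x a e * qE x e)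
    = -(∑ x, pX x * ∑ e,
        if pe pE π₀ x e = 0 then pe pE π x e * qE x e else 0) :=
  mips_bias_deficient_embeddings_general pX π π₀ pE qE

end

end OPE
end

section
/- Lemma 5 (CHIPS weight as conditional expectation of the IPS weight). Assume Assumption A1 (common support). Let c be a cluster with p(c) > 0 and a an action with p(a|c,π₀) > 0, and define the conditional context distribution under the logging policy by π₀(x|a,c) = p(x|c) · π₀ x a / p(a|c,π₀). Then w(a,c) = Σ_x π₀(x|a,c) · w(a,x). -/
open Finset

namespace OPE

noncomputable section

variable {X C A : Type*} [Fintype X] [Fintype C] [Fintype A]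
  [Nonempty X] [Nonempty C] [Nonempty A]

/-- Lemma 5 (CHIPS weight as conditional expectation of the IPS weight). -/
theorem lemma5_chips_weight_cond_expectation
    (pX : X → ℝ) (pC : X → C → ℝ) (π π₀ : X → A → ℝ)
    (hpX0 : ∀ x, 0 ≤ pX x) (hpX1 : ∑ x, pX x = 1)
    (hpC0 : ∀ x c, 0 ≤ pC x c) (hpC1 : ∀ x, ∑ c, pC x c = 1)
    (hπ : ∀ x a, 0 ≤ π x a) (hπ1 : ∀ x, ∑ a, π x a = 1)
    (hπ₀ : ∀ x a, 0 ≤ π₀ x a) (hπ₀1 : ∀ x, ∑ a, π₀ x a = 1)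
    (hA1 : ∀ (x : X) (a : A), 0 < π x a → 0 < π₀ x a)
    (c : C) (a : A) (hc : 0 < pc pX pC c) (ha : 0 < pac pX pC π₀ c a) :
    wCHIPS pX pC π π₀ a c
      = ∑ x, (pxc pX pC x c * π₀ x a / pac pX pC π₀ c a) * wIPS π π₀ a x := by
  have key : ∀ x : X, pxc pX pC x c * π₀ x a * (π x a / π₀ x a)
      = pxc pX pC x c * π x a := by
    intro x
    rcases eq_or_lt_of_le (hπ₀ x a) with h0 | h0
    · have hπ0 : π x a = 0 := by
        by_contra h
        exact absurd (hA1 x a (lt_of_le_of_ne (hπ x a) (Ne.symm h))) (by rw [← h0]; simp)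
      rw [← h0, hπ0]; ring
    · field_simp
  unfold wCHIPS pac wIPS
  unfold pac at ha
  rw [show (∑ x, (pxc pX pC x c * π₀ x a / ∑ x, pxc pX pC x c * π₀ x a) * (π x a / π₀ x a))
      = ∑ x, (pxc pX pC x c * π x a) / ∑ x, pxc pX pC x c * π₀ x a from
    Finset.sum_congr rfl fun x _ => by
      rw [div_mul_eq_mul_div, key x]]
  rw [← Finset.sum_div]

end

end OPE
end

section
/- Proposition 6 (variance reduction of CHIPS over IPS). Assume Assumption A1 (common support), Assumption A3 (reward homogeneity, with cluster-level mean reward q̄), and that the conditional second moment of the reward also depends only on the action and cluster, given by m̄2 : A → C → ℝ with m̄2 a c ≥ 0. Then, with π₀(x|a,c) = p(x|c) · π₀ x a / p(a|c,π₀) for p(a|c,π₀) > 0, Var(ω_IPS) − Var(ω_CHIPS) = Σ_c p(c) · Σ_{a : p(a|c,π₀) > 0} p(a|c,π₀) · (Σ_x π₀(x|a,c) · w(a,x)² − (Σ_x π₀(x|a,c) · w(a,x))²) · m̄2 a c, where ω_IPS(x,c,a) = w(a,x) and ω_CHIPS(x,c,a) = w(a,c); in particular Var(ω_IPS) − Var(ω_CHIPS)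 ≥ 0. -/
open Finset

namespace OPE

noncomputable section

variable {X C A : Type*} [Fintype X] [Fintype C] [Fintype A]
  [Nonempty X] [Nonempty C] [Nonempty A]

/-- Cauchy–Schwarz: variance of a pmf-weighted variable is nonnegative. -/
lemma cs_var (p w : X → ℝ) (hp : ∀ x, 0 ≤ p x) (hp1 : ∑ x, p x = 1) :
    (∑ x, p x * w x) ^ 2 ≤ ∑ x, p x * w x ^ 2 := by
  have h := Finset.sum_mul_sq_le_sq_mul_sq Finset.univ
    (fun x => Real.sqrt (p x)) (fun x => Real.sqrt (p x) * w x)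
  have e1 : ∑ x, Real.sqrt (p x) * (Real.sqrt (p x) * w x) = ∑ x, p x * w x :=
    Finset.sum_congr rfl fun x _ => by rw [← mul_assoc, Real.mul_self_sqrt (hp x)]
  have e2 : ∑ x, Real.sqrt (p x) ^ 2 = 1 := by
    rw [← hp1]; exact Finset.sum_congr rfl fun x _ => Real.sq_sqrt (hp x)
  have e3 : ∑ x, (Real.sqrt (p x) * w x) ^ 2 = ∑ x, p x * w x ^ 2 :=
    Finset.sum_congr rfl fun x _ => by rw [mul_pow, Real.sq_sqrt (hp x)]
  simpa [e1, e2, e3] using h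

/-- Proposition 6 (variance reduction of CHIPS over IPS). -/
theorem prop6_variance_reduction
    (pX : X → ℝ) (pC : X → C → ℝ) (π π₀ : X → A → ℝ)
    (q m2 : A → C → X → ℝ) (qbar m2bar : A → C → ℝ)
    (hpX0 : ∀ x, 0 ≤ pX x) (hpX1 : ∑ x, pX x = 1)
    (hpC0 : ∀ x c, 0 ≤ pC x c) (hpC1 : ∀ x, ∑ c, pC x c = 1)
    (hπ : ∀ x a, 0 ≤ π x a) (hπ1 : ∀ x, ∑ a, π x a = 1)
    (hπ₀ : ∀ x a, 0 ≤ π₀ x a) (hπ₀1 : ∀ x, ∑ a, π₀ x a = 1)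
    (hA1 : ∀ (x : X) (a : A), 0 < π x a → 0 < π₀ x a)
    (hA3 : ∀ (a : A) (c : C) (x : X), q a c x = qbar a c)
    (hm2 : ∀ (a : A) (c : C) (x : X), m2 a c x = m2bar a c)
    (hm2bar : ∀ a c, 0 ≤ m2bar a c) :
    (varW pX pC π₀ q m2 (fun x c a => wIPS π π₀ a x)
      - varW pX pC π₀ q m2 (fun x c a => wCHIPS pX pC π π₀ a c)
    = ∑ c, pc pX pC c * ∑ a,
        if 0 < pac pX pC π₀ c a then
          pac pX pC π₀ c a *
            ((∑ x, (pxc pX pC x c * π₀ x a / pac pX pC π₀ c a) * wIPS π π₀ a x ^ 2)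
              - (∑ x, (pxc pX pC x c * π₀ x a / pac pX pC π₀ c a) * wIPS π π₀ a x) ^ 2)
            * m2bar a c
        else 0) ∧
    (0 ≤ varW pX pC π₀ q m2 (fun x c a => wIPS π π₀ a x)
      - varW pX pC π₀ q m2 (fun x c a => wCHIPS pX pC π π₀ a c)) := by
  classical
  -- basic nonnegativity facts
  have hpc0 : ∀ c, 0 ≤ pc pX pC c := fun c =>
    Finset.sum_nonneg fun x _ => mul_nonneg (hpX0 x) (hpC0 x c)
  have hpxc0 : ∀ x c, 0 ≤ pxc pX pC x c := fun x c =>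
    div_nonneg (mul_nonneg (hpX0 x) (hpC0 x c)) (hpc0 c)
  have hP00 : ∀ c a, 0 ≤ pac pX pC π₀ c a := fun c a =>
    Finset.sum_nonneg fun x _ => mul_nonneg (hpxc0 x c) (hπ₀ x a)
  -- key pointwise identity from A1
  have hA1' : ∀ x a, π₀ x a * wIPS π π₀ a x = π x a := by
    intro x a
    by_cases h : π₀ x a = 0
    · rcases (hπ x a).lt_or_eq with h' | h'
      · exact absurd h (hA1 x a h').ne'
      · simp [wIPS, h, ← h']
    · rw [wIPS, mul_comm, div_mul_cancel₀ _ h]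
  -- splitting the joint probability
  have hsplit : ∀ x c, pX x * pC x c = pc pX pC c * pxc pX pC x c := by
    intro x c
    by_cases h : pc pX pC c = 0
    · have h' : ∑ x, pX x * pC x c = 0 := h
      have hz : pX x * pC x c = 0 :=
        (Finset.sum_eq_zero_iff_of_nonneg
          (fun x _ => mul_nonneg (hpX0 x) (hpC0 x c))).mp h' x (Finset.mem_univ x)
      simp [h, hz]
    · rw [pxc]; field_simp
  have hgroup : ∀ (c : C) (a : A) (f : X → ℝ),
      ∑ x, pX x * pC x c * π₀ x a * f x
        = pc pX pC c * ∑ x, pxc pX pC x c * π₀ x a * f x := by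
    intro c a f
    rw [Finset.mul_sum]
    exact Finset.sum_congr rfl fun x _ => by rw [hsplit x c]; ring
  have hpacπ : ∀ c a, ∑ x, pxc pX pC x c * π₀ x a * wIPS π π₀ a x = pac pX pC π c a := by
    intro c a
    rw [pac]
    exact Finset.sum_congr rfl fun x _ => by rw [mul_assoc, hA1' x a]
  have hzero : ∀ c a, pac pX pC π₀ c a = 0 → ∀ x, pxc pX pC x c * π₀ x a = 0 := by
    intro c a h x
    have h' : ∑ x, pxc pX pC x c * π₀ x a = 0 := h
    exact (Finset.sum_eq_zero_iff_of_nonneg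
      (fun x _ => mul_nonneg (hpxc0 x c) (hπ₀ x a))).mp h' x (Finset.mem_univ x)
  have hπzero : ∀ c a, pac pX pC π₀ c a = 0 → pac pX pC π c a = 0 := by
    intro c a h
    rw [← hpacπ c a]
    exact Finset.sum_eq_zero fun x _ => by rw [hzero c a h x, zero_mul]
  -- swapping triple sums
  have swap3 : ∀ (F : X → C → A → ℝ),
      ∑ x, ∑ c, ∑ a, F x c a = ∑ c, ∑ a, ∑ x, F x c a := by
    intro F
    rw [Finset.sum_comm]
    exact Finset.sum_congr rfl fun c _ => Finset.sum_comm
  -- both estimators have the same mean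
  have hM : mu pX pC π₀ q (fun x c a => wIPS π π₀ a x)
      = ∑ c, ∑ a, pc pX pC c * pac pX pC π c a * qbar a c := by
    simp only [mu]
    rw [swap3]
    refine Finset.sum_congr rfl fun c _ => Finset.sum_congr rfl fun a _ => ?_
    calc ∑ x, pX x * pC x c * π₀ x a * wIPS π π₀ a x * q a c x
        = (∑ x, pX x * pC x c * π₀ x a * wIPS π π₀ a x) * qbar a c := by
          rw [Finset.sum_mul]
          exact Finset.sum_congr rfl fun x _ => by rw [hA3]
      _ = pc pX pC c * pac pX pC π c a * qbar a c := by
          rw [hgroup c a (fun x => wIPS π π₀ a x), hpacπ c a]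
  have hMC : mu pX pC π₀ q (fun x c a => wCHIPS pX pC π π₀ a c)
      = ∑ c, ∑ a, pc pX pC c * pac pX pC π c a * qbar a c := by
    simp only [mu]
    rw [swap3]
    refine Finset.sum_congr rfl fun c _ => Finset.sum_congr rfl fun a _ => ?_
    calc ∑ x, pX x * pC x c * π₀ x a * wCHIPS pX pC π π₀ a c * q a c x
        = (∑ x, pX x * pC x c * π₀ x a * 1) * (wCHIPS pX pC π π₀ a c * qbar a c) := by
          rw [Finset.sum_mul]
          exact Finset.sum_congr rfl fun x _ => by rw [hA3]; ring
      _ = (pc pX pC c * pac pX pC π₀ c a) * (wCHIPS pX pC π π₀ a c * qbar a c) := by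
          rw [hgroup c a (fun _ => 1)]
          congr 1
          congr 1
          rw [pac]
          exact Finset.sum_congr rfl fun x _ => by rw [mul_one]
      _ = pc pX pC c * pac pX pC π c a * qbar a c := by
          by_cases h : pac pX pC π₀ c a = 0
          · rw [wCHIPS, h, hπzero c a h]; simp
          · rw [wCHIPS]; field_simp
  have hmu : mu pX pC π₀ q (fun x c a => wIPS π π₀ a x)
      = mu pX pC π₀ q (fun x c a => wCHIPS pX pC π π₀ a c) := hM.trans hMC.symm
  -- the per-(c,a) identity for second moments
  have inner : ∀ c a,
      (∑ x, pxc pX pC x c * π₀ x a * (wIPS π π₀ a x ^ 2 * m2bar a c))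
        - pac pX pC π₀ c a * (wCHIPS pX pC π π₀ a c ^ 2 * m2bar a c)
      = if 0 < pac pX pC π₀ c a then
          pac pX pC π₀ c a *
            ((∑ x, (pxc pX pC x c * π₀ x a / pac pX pC π₀ c a) * wIPS π π₀ a x ^ 2)
              - (∑ x, (pxc pX pC x c * π₀ x a / pac pX pC π₀ c a) * wIPS π π₀ a x) ^ 2)
            * m2bar a c
        else 0 := by
    intro c a
    by_cases h : 0 < pac pX pC π₀ c a
    · rw [if_pos h]
      have hne : pac pX pC π₀ c a ≠ 0 := h.ne'
      have e1 : ∑ x, (pxc pX pC x c * π₀ x a / pac pX pC π₀ c a) * wIPS π π₀ a x ^ 2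
          = (∑ x, pxc pX pC x c * π₀ x a * wIPS π π₀ a x ^ 2) / pac pX pC π₀ c a := by
        rw [Finset.sum_div]
        exact Finset.sum_congr rfl fun x _ => by ring
      have e2 : ∑ x, (pxc pX pC x c * π₀ x a / pac pX pC π₀ c a) * wIPS π π₀ a x
          = pac pX pC π c a / pac pX pC π₀ c a := by
        rw [← hpacπ c a, Finset.sum_div]
        exact Finset.sum_congr rfl fun x _ => by ring
      have e3 : ∑ x, pxc pX pC x c * π₀ x a * (wIPS π π₀ a x ^ 2 * m2bar a c)
          = (∑ x, pxc pX pC x c * π₀ x a * wIPS π π₀ a x ^ 2) * m2bar a c := by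
        rw [Finset.sum_mul]
        exact Finset.sum_congr rfl fun x _ => by ring
      rw [e1, e2, e3, wCHIPS]
      field_simp
    · rw [if_neg h]
      have h0 : pac pX pC π₀ c a = 0 := le_antisymm (not_lt.mp h) (hP00 c a)
      have hz := hzero c a h0
      have hs : ∑ x, pxc pX pC x c * π₀ x a * (wIPS π π₀ a x ^ 2 * m2bar a c) = 0 :=
        Finset.sum_eq_zero fun x _ => by rw [hz x, zero_mul]
      rw [hs, h0]
      ring
  -- the main second-moment computation
  have hS : (∑ x, ∑ c, ∑ a, (pX x * pC x c * π₀ x a) * wIPS π π₀ a x ^ 2 * m2 a c x)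
      - (∑ x, ∑ c, ∑ a, (pX x * pC x c * π₀ x a) * wCHIPS pX pC π π₀ a c ^ 2 * m2 a c x)
      = ∑ c, pc pX pC c * ∑ a,
          if 0 < pac pX pC π₀ c a then
            pac pX pC π₀ c a *
              ((∑ x, (pxc pX pC x c * π₀ x a / pac pX pC π₀ c a) * wIPS π π₀ a x ^ 2)
                - (∑ x, (pxc pX pC x c * π₀ x a / pac pX pC π₀ c a) * wIPS π π₀ a x) ^ 2)
              * m2bar a c
          else 0 := by
    rw [swap3, swap3, ← Finset.sum_sub_distrib]
    refine Finset.sum_congr rfl fun c _ => ?_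
    rw [Finset.mul_sum, ← Finset.sum_sub_distrib]
    refine Finset.sum_congr rfl fun a _ => ?_
    have l1 : ∑ x, pX x * pC x c * π₀ x a * wIPS π π₀ a x ^ 2 * m2 a c x
        = pc pX pC c * ∑ x, pxc pX pC x c * π₀ x a * (wIPS π π₀ a x ^ 2 * m2bar a c) := by
      rw [← hgroup c a (fun x => wIPS π π₀ a x ^ 2 * m2bar a c)]
      exact Finset.sum_congr rfl fun x _ => by rw [hm2]; ring
    have l2 : ∑ x, pX x * pC x c * π₀ x a * wCHIPS pX pC π π₀ a c ^ 2 * m2 a c x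
        = pc pX pC c * (pac pX pC π₀ c a * (wCHIPS pX pC π π₀ a c ^ 2 * m2bar a c)) := by
      rw [show pac pX pC π₀ c a * (wCHIPS pX pC π π₀ a c ^ 2 * m2bar a c)
            = ∑ x, pxc pX pC x c * π₀ x a * (wCHIPS pX pC π π₀ a c ^ 2 * m2bar a c) by
          rw [pac, Finset.sum_mul]]
      rw [← hgroup c a (fun _ => wCHIPS pX pC π π₀ a c ^ 2 * m2bar a c)]
      exact Finset.sum_congr rfl fun x _ => by rw [hm2]; ring
    rw [l1, l2, ← mul_sub, inner c a]
  -- assemble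
  have h1 : varW pX pC π₀ q m2 (fun x c a => wIPS π π₀ a x)
      - varW pX pC π₀ q m2 (fun x c a => wCHIPS pX pC π π₀ a c)
      = ∑ c, pc pX pC c * ∑ a,
          if 0 < pac pX pC π₀ c a then
            pac pX pC π₀ c a *
              ((∑ x, (pxc pX pC x c * π₀ x a / pac pX pC π₀ c a) * wIPS π π₀ a x ^ 2)
                - (∑ x, (pxc pX pC x c * π₀ x a / pac pX pC π₀ c a) * wIPS π π₀ a x) ^ 2)
              * m2bar a c
          else 0 := by
    simp only [varW]
    rw [hmu, ← hS]
    ring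
  refine ⟨h1, ?_⟩
  rw [h1]
  refine Finset.sum_nonneg fun c _ => mul_nonneg (hpc0 c) ?_
  refine Finset.sum_nonneg fun a _ => ?_
  split_ifs with h
  · refine mul_nonneg (mul_nonneg h.le ?_) (hm2bar a c)
    have hp : ∀ x, 0 ≤ pxc pX pC x c * π₀ x a / pac pX pC π₀ c a := fun x =>
      div_nonneg (mul_nonneg (hpxc0 x c) (hπ₀ x a)) (hP00 c a)
    have hp1 : ∑ x, pxc pX pC x c * π₀ x a / pac pX pC π₀ c a = 1 := by
      rw [← Finset.sum_div]
      have : ∑ x, pxc pX pC x c * π₀ x a = pac pX pC π₀ c a := rfl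
      rw [this, div_self h.ne']
    have hcs : (∑ x, (pxc pX pC x c * π₀ x a / pac pX pC π₀ c a) * wIPS π π₀ a x) ^ 2
        ≤ ∑ x, (pxc pX pC x c * π₀ x a / pac pX pC π₀ c a) * wIPS π π₀ a x ^ 2 :=
      cs_var _ _ hp hp1
    linarith
  · exact le_refl 0

end

end OPE
end
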